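/- arXiv:1303.0167 — 5 statements merged into one kernel-verified Lean document; each statement's English description precedes it below -/
import Mathlib

section
/- Let 𝒜 : ℝ^{m×n} → ℝ^p be a linear map satisfying the R-RIP at rank 2r with constant δ ∈ (0,1). Suppose y = 𝒜(X★) + e for some matrix X★ ∈ ℝ^{m×n} with rank(X★) ≤ r and noise vector e ∈ ℝ^p. If X ∈ ℝ^{m×n} has rank(X) ≤ r and f(X) ≤ γ for some γ ≥ 0, then ‖X − X★‖_F² ≤ (√γ + ‖e‖₂)² / (1 − δ). -/
open scoped BigOperators

/-- Squared Frobenius norm of a real matrix. -/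
noncomputable def frobSq {m n : ℕ} (X : Matrix (Fin m) (Fin n) ℝ) : ℝ :=
  ∑ i, ∑ j, (X i j) ^ 2

/-- Frobenius norm of a real matrix. -/
noncomputable def frobNorm {m n : ℕ} (X : Matrix (Fin m) (Fin n) ℝ) : ℝ :=
  Real.sqrt (frobSq X)

/-- Frobenius inner product `⟨X, Y⟩ = tr(Xᵀ Y)`. -/
noncomputable def frobInner {m n : ℕ} (X Y : Matrix (Fin m) (Fin n) ℝ) : ℝ :=
  ∑ i, ∑ j, X i j * Y i j

/-- Squared Euclidean norm on `ℝ^p`. -/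
noncomputable def vecNormSq {p : ℕ} (v : Fin p → ℝ) : ℝ := ∑ i, (v i) ^ 2

/-- Euclidean norm on `ℝ^p`. -/
noncomputable def vecNorm {p : ℕ} (v : Fin p → ℝ) : ℝ := Real.sqrt (vecNormSq v)

/-- Euclidean inner product on `ℝ^p`. -/
noncomputable def dotp {p : ℕ} (v w : Fin p → ℝ) : ℝ := ∑ i, v i * w i

/-- Rank restricted isometry property (R-RIP) at rank `s` with constant `δ`. -/
def RIP {m n p : ℕ} (A : Matrix (Fin m) (Fin n) ℝ →ₗ[ℝ] (Fin p → ℝ)) (s : ℕ) (δ : ℝ) : Prop :=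
  ∀ X : Matrix (Fin m) (Fin n) ℝ, X.rank ≤ s →
    (1 - δ) * frobSq X ≤ vecNormSq (A X) ∧ vecNormSq (A X) ≤ (1 + δ) * frobSq X

/-- The data error `f(X) = ‖y - 𝒜 X‖₂²`. -/
noncomputable def dataErr {m n p : ℕ} (A : Matrix (Fin m) (Fin n) ℝ →ₗ[ℝ] (Fin p → ℝ))
    (y : Fin p → ℝ) (X : Matrix (Fin m) (Fin n) ℝ) : ℝ :=
  vecNormSq (y - A X)

/-- `Aadj` is the adjoint of `A` with respect to the Frobenius and Euclidean inner products. -/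
def IsAdjoint {m n p : ℕ} (A : Matrix (Fin m) (Fin n) ℝ →ₗ[ℝ] (Fin p → ℝ))
    (Aadj : (Fin p → ℝ) →ₗ[ℝ] Matrix (Fin m) (Fin n) ℝ) : Prop :=
  ∀ (z : Fin p → ℝ) (X : Matrix (Fin m) (Fin n) ℝ), frobInner (Aadj z) X = dotp z (A X)

/-- The gradient `∇f(X) = 2 𝒜*(𝒜 X - y)` of the data error. -/
noncomputable def gradErr {m n p : ℕ} (A : Matrix (Fin m) (Fin n) ℝ →ₗ[ℝ] (Fin p → ℝ))
    (Aadj : (Fin p → ℝ) →ₗ[ℝ] Matrix (Fin m) (Fin n) ℝ) (y : Fin p → ℝ)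
    (X : Matrix (Fin m) (Fin n) ℝ) : Matrix (Fin m) (Fin n) ℝ :=
  (2 : ℝ) • Aadj (A X - y)

open Cardinal in
lemma matRank_add_le {m n : ℕ} (A B : Matrix (Fin m) (Fin n) ℝ) :
    (A + B).rank ≤ A.rank + B.rank := by
  have h := LinearMap.rank_add_le A.mulVecLin B.mulVecLin
  have hA : A.mulVecLin.rank < ℵ₀ :=
    lt_of_le_of_lt (Submodule.rank_le _) (Module.rank_lt_aleph0 ℝ _)
  have hB : B.mulVecLin.rank < ℵ₀ :=
    lt_of_le_of_lt (Submodule.rank_le _) (Module.rank_lt_aleph0 ℝ _)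
  calc (A + B).rank = ((A + B).mulVecLin.rank).toNat := rfl
    _ = ((A.mulVecLin + B.mulVecLin).rank).toNat := by rw [Matrix.mulVecLin_add]
    _ ≤ (A.mulVecLin.rank + B.mulVecLin.rank).toNat :=
        Cardinal.toNat_le_toNat h (Cardinal.add_lt_aleph0 hA hB)
    _ = A.rank + B.rank := Cardinal.toNat_add hA hB

lemma matRank_neg {m n : ℕ} (A : Matrix (Fin m) (Fin n) ℝ) : (-A).rank = A.rank := by
  have : (-A).mulVecLin = -(A.mulVecLin) := by
    ext v i; simp [Matrix.mulVecLin, Matrix.neg_mulVec]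
  unfold Matrix.rank
  rw [this, LinearMap.range_neg]

lemma vecNormSq_nonneg {p : ℕ} (v : Fin p → ℝ) : 0 ≤ vecNormSq v :=
  Finset.sum_nonneg fun i _ => sq_nonneg _

lemma tri_sq {p : ℕ} (v w : Fin p → ℝ) :
    vecNormSq (v + w) ≤ (vecNorm v + vecNorm w) ^ 2 := by
  have hv := vecNormSq_nonneg v
  have hw := vecNormSq_nonneg w
  have cs := Real.sum_mul_le_sqrt_mul_sqrt Finset.univ v w
  have hexp : vecNormSq (v + w)
      = vecNormSq v + 2 * (∑ i, v i * w i) + vecNormSq w := by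
    unfold vecNormSq
    rw [Finset.mul_sum, ← Finset.sum_add_distrib, ← Finset.sum_add_distrib]
    exact Finset.sum_congr rfl fun i _ => by simp [add_sq]; ring
  have h1 : vecNorm v ^ 2 = vecNormSq v := Real.sq_sqrt hv
  have h2 : vecNorm w ^ 2 = vecNormSq w := Real.sq_sqrt hw
  have hsq : (vecNorm v + vecNorm w) ^ 2
      = vecNormSq v + 2 * (vecNorm v * vecNorm w) + vecNormSq w := by
    rw [add_sq, h1, h2]; ring
  rw [hexp, hsq]
  have : (∑ i, v i * w i) ≤ vecNorm v * vecNorm w := by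
    simpa [vecNorm, vecNormSq] using cs
  linarith

/-- If `𝒜` satisfies the R-RIP at rank `2r` with constant `δ ∈ (0,1)`,
`y = 𝒜 X★ + e` with `rank X★ ≤ r`, and `X` has `rank X ≤ r` with `f(X) ≤ γ`, then
`‖X - X★‖_F² ≤ (√γ + ‖e‖₂)² / (1 - δ)`. -/
theorem stmt0 {m n p : ℕ} (A : Matrix (Fin m) (Fin n) ℝ →ₗ[ℝ] (Fin p → ℝ))
    (r : ℕ) (δ : ℝ) (hδ0 : 0 < δ) (hδ1 : δ < 1) (hRIP : RIP A (2 * r) δ)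
    (Xstar : Matrix (Fin m) (Fin n) ℝ) (hXstar : Xstar.rank ≤ r)
    (e : Fin p → ℝ) (y : Fin p → ℝ) (hy : y = A Xstar + e)
    (X : Matrix (Fin m) (Fin n) ℝ) (hX : X.rank ≤ r)
    (γ : ℝ) (hγ : 0 ≤ γ) (hfX : dataErr A y X ≤ γ) :
    frobSq (X - Xstar) ≤ (Real.sqrt γ + vecNorm e) ^ 2 / (1 - δ) := by
  have hrank : (X - Xstar).rank ≤ 2 * r := by
    have := matRank_add_le X (-Xstar)
    rw [matRank_neg] at this
    rw [sub_eq_add_neg]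
    omega
  have hlow := (hRIP _ hrank).1
  have hAdecomp : A (X - Xstar) = (A X - y) + e := by
    rw [map_sub, hy]; abel
  have hdataeq : vecNormSq (A X - y) = dataErr A y X := by
    unfold dataErr vecNormSq
    refine Finset.sum_congr rfl fun i _ => ?_
    have h : (A X - y) i = -((y - A X) i) := by simp
    rw [h, neg_sq]
  have hbound1 : vecNorm (A X - y) ≤ Real.sqrt γ := by
    unfold vecNorm
    rw [hdataeq]
    exact Real.sqrt_le_sqrt hfX
  have htri := tri_sq (A X - y) e
  have hnn1 : 0 ≤ vecNorm (A X - y) := Real.sqrt_nonneg _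
  have hnn2 : 0 ≤ vecNorm e := Real.sqrt_nonneg _
  have hmono : (vecNorm (A X - y) + vecNorm e) ^ 2 ≤ (Real.sqrt γ + vecNorm e) ^ 2 := by
    apply pow_le_pow_left₀ (by positivity)
    linarith
  have hkey : (1 - δ) * frobSq (X - Xstar) ≤ (Real.sqrt γ + vecNorm e) ^ 2 := by
    calc (1 - δ) * frobSq (X - Xstar) ≤ vecNormSq (A (X - Xstar)) := hlow
      _ = vecNormSq ((A X - y) + e) := by rw [hAdecomp]
      _ ≤ (vecNorm (A X - y) + vecNorm e) ^ 2 := htri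
      _ ≤ _ := hmono
  have hpos : 0 < 1 - δ := by linarith
  rw [le_div_iff₀ hpos]
  linarith
end

section
/- Let 𝒜 : ℝ^{m×n} → ℝ^p be a linear map satisfying the R-RIP at rank s with constant δ ∈ (0,1), and set L = 2(1+δ). Then for all matrices X, X̃ ∈ ℝ^{m×n} with rank(X̃ − X) ≤ s, we have f(X̃) ≤ f(X) − (1/(2L))‖∇f(X)‖_F² + (L/2)‖X̃ − (X − (1/L)∇f(X))‖_F². -/
open scoped BigOperators

lemma vecNormSq_sub {p : ℕ} (v w : Fin p → ℝ) :
    vecNormSq (v - w) = vecNormSq v - 2 * dotp v w + vecNormSq w := by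
  have h : ∀ i, (v i - w i) ^ 2 = v i ^ 2 - 2 * (v i * w i) + w i ^ 2 := fun i => by ring
  simp [vecNormSq, dotp, Pi.sub_apply, h, Finset.sum_add_distrib, Finset.sum_sub_distrib,
    Finset.mul_sum]

lemma frobSq_add_smul {m n : ℕ} (D G : Matrix (Fin m) (Fin n) ℝ) (c : ℝ) :
    frobSq (D + c • G) = frobSq D + 2 * c * frobInner D G + c ^ 2 * frobSq G := by
  have h : ∀ i j, (D i j + c * G i j) ^ 2
      = D i j ^ 2 + 2 * c * (D i j * G i j) + c ^ 2 * G i j ^ 2 := fun i j => by ring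
  simp [frobSq, frobInner, Matrix.add_apply, Matrix.smul_apply, h, Finset.sum_add_distrib,
    Finset.mul_sum, smul_eq_mul]

lemma frobInner_smul_left {m n : ℕ} (c : ℝ) (M N : Matrix (Fin m) (Fin n) ℝ) :
    frobInner (c • M) N = c * frobInner M N := by
  simp [frobInner, Matrix.smul_apply, Finset.mul_sum, smul_eq_mul, mul_assoc]

lemma frobInner_comm {m n : ℕ} (M N : Matrix (Fin m) (Fin n) ℝ) :
    frobInner M N = frobInner N M := by
  simp [frobInner, mul_comm]

lemma dotp_neg_left {p : ℕ} (v w : Fin p → ℝ) : dotp (-v) w = - dotp v w := by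
  simp [dotp]

/-- Restricted smoothness bound for the data error: if `𝒜` satisfies the
R-RIP at rank `s` with constant `δ ∈ (0,1)` and `L = 2(1+δ)`, then for all `X, X̃` with
`rank(X̃ - X) ≤ s`,
`f(X̃) ≤ f(X) - (1/(2L))‖∇f(X)‖_F² + (L/2)‖X̃ - (X - (1/L)∇f(X))‖_F²`. -/
theorem stmt1 {m n p : ℕ} (A : Matrix (Fin m) (Fin n) ℝ →ₗ[ℝ] (Fin p → ℝ))
    (Aadj : (Fin p → ℝ) →ₗ[ℝ] Matrix (Fin m) (Fin n) ℝ) (hAdj : IsAdjoint A Aadj)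
    (y : Fin p → ℝ) (s : ℕ) (δ : ℝ) (hδ0 : 0 < δ) (hδ1 : δ < 1)
    (hRIP : RIP A s δ) (L : ℝ) (hL : L = 2 * (1 + δ)) :
    ∀ X Xt : Matrix (Fin m) (Fin n) ℝ, (Xt - X).rank ≤ s →
      dataErr A y Xt ≤ dataErr A y X - (1 / (2 * L)) * frobSq (gradErr A Aadj y X)
        + (L / 2) * frobSq (Xt - (X - (1 / L) • gradErr A Aadj y X)) := by
  intro X Xt hrank
  set D := Xt - X with hD
  set G := gradErr A Aadj y X with hG
  have hL0 : (0:ℝ) < L := by rw [hL]; linarith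
  have hLne : L ≠ 0 := ne_of_gt hL0
  have hAXt : A Xt = A X + A D := by rw [hD, map_sub]; abel
  have hf : dataErr A y Xt = dataErr A y X - 2 * dotp (y - A X) (A D) + vecNormSq (A D) := by
    have h1 : y - A Xt = (y - A X) - A D := by rw [hAXt]; abel
    simp only [dataErr, h1, vecNormSq_sub]
  have hGD : frobInner D G = -2 * dotp (y - A X) (A D) := by
    rw [frobInner_comm, hG, gradErr, frobInner_smul_left, hAdj]
    have h2 : A X - y = -(y - A X) := by abel
    rw [h2, dotp_neg_left]; ring
  have hmat : Xt - (X - (1/L) • G) = D + (1/L) • G := by rw [hD]; abel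
  have hQ : vecNormSq (A D) ≤ (1 + δ) * frobSq D := (hRIP D hrank).2
  rw [hf, hmat, frobSq_add_smul, hGD]
  have key : (L/2) * (frobSq D + 2 * (1/L) * (-2 * dotp (y - A X) (A D))
      + (1/L)^2 * frobSq G)
      = (L/2) * frobSq D - 2 * dotp (y - A X) (A D) + (1/(2*L)) * frobSq G := by
    field_simp; ring
  rw [key]
  have hhalf : (L/2) * frobSq D = (1 + δ) * frobSq D := by rw [hL]; ring
  linarith [hQ]
end

section
/- Let 𝒜 : ℝ^{m×n} → ℝ^p be a linear map satisfying the R-RIP at rank 2r with constant δ ∈ (0,1), and set M = 2(1−δ). Then for all matrices X, Z ∈ ℝ^{m×n} with rank(Z − X) ≤ 2r, we have f(Z) ≥ f(X) + ⟨∇f(X), Z − X⟩ + (M/2)‖Z − X‖_F² (restricted strong convexity). -/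
open scoped BigOperators

/-- Restricted strong convexity of the data error: if `𝒜` satisfies the
R-RIP at rank `2r` with constant `δ ∈ (0,1)` and `M = 2(1-δ)`, then for all `X, Z` with
`rank(Z - X) ≤ 2r`, `f(Z) ≥ f(X) + ⟨∇f(X), Z - X⟩ + (M/2)‖Z - X‖_F²`. -/
theorem stmt2 {m n p : ℕ} (A : Matrix (Fin m) (Fin n) ℝ →ₗ[ℝ] (Fin p → ℝ))
    (Aadj : (Fin p → ℝ) →ₗ[ℝ] Matrix (Fin m) (Fin n) ℝ) (hAdj : IsAdjoint A Aadj)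
    (y : Fin p → ℝ) (r : ℕ) (δ : ℝ) (hδ0 : 0 < δ) (hδ1 : δ < 1)
    (hRIP : RIP A (2 * r) δ) (M : ℝ) (hM : M = 2 * (1 - δ)) :
    ∀ X Z : Matrix (Fin m) (Fin n) ℝ, (Z - X).rank ≤ 2 * r →
      dataErr A y Z ≥ dataErr A y X + frobInner (gradErr A Aadj y X) (Z - X)
        + (M / 2) * frobSq (Z - X) := by
  intro X Z hrank
  have hA := (hRIP (Z - X) hrank).1
  have hadj := hAdj (A X - y) (Z - X)
  have hgrad : frobInner (gradErr A Aadj y X) (Z - X)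
      = 2 * dotp (A X - y) (A (Z - X)) := by
    simp only [gradErr, frobInner, Matrix.smul_apply, smul_eq_mul] at hadj ⊢
    rw [← hadj]
    simp [Finset.mul_sum, mul_assoc]
  have key : dataErr A y Z = dataErr A y X + frobInner (gradErr A Aadj y X) (Z - X)
      + vecNormSq (A (Z - X)) := by
    rw [hgrad]
    simp only [dataErr, vecNormSq, dotp, map_sub, Pi.sub_apply]
    rw [Finset.mul_sum, ← Finset.sum_add_distrib, ← Finset.sum_add_distrib]
    apply Finset.sum_congr rfl
    intro i _
    ring
  rw [key, hM]
  have hfs : 0 ≤ frobSq (Z - X) := by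
    apply Finset.sum_nonneg; intro i _; apply Finset.sum_nonneg; intro j _; positivity
  nlinarith [hA]
end

section
/- Let 𝒜 : ℝ^{m×n} → ℝ^p be a linear map satisfying the R-RIP at rank r+ℓ with constant δ ∈ (0,1). Suppose y = 𝒜(X★) + e with rank(X★) ≤ r, and X̃ ∈ ℝ^{m×n} has rank(X̃) ≤ ℓ. Let C > 0 and assume f(X̃) > C²‖e‖₂². Then ‖X̃ − X★‖_F² ≤ ((1 + 2/C)/(1 − δ))·f(X̃) + (1/(1 − δ))·‖e‖₂². -/
open scoped BigOperators

lemma my_rank_sub_le {m n : ℕ} (A B : Matrix (Fin m) (Fin n) ℝ) :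
    (A - B).rank ≤ A.rank + B.rank := by
  simp only [Matrix.rank]
  have hle : LinearMap.range (A - B).mulVecLin ≤
      LinearMap.range A.mulVecLin ⊔ LinearMap.range B.mulVecLin := by
    rintro _ ⟨v, rfl⟩
    have : (A - B).mulVecLin v = A.mulVecLin v + B.mulVecLin (-v) := by
      simp [Matrix.mulVecLin_apply, Matrix.sub_mulVec, Matrix.neg_mulVec,
        sub_eq_add_neg, Matrix.mulVec_neg]
    rw [this]
    exact Submodule.add_mem_sup ⟨v, rfl⟩ ⟨-v, rfl⟩
  exact le_trans (Submodule.finrank_mono hle)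
    (Submodule.finrank_add_le_finrank_add_finrank _ _)

/-- If `𝒜` satisfies the R-RIP at rank `r+ℓ` with constant `δ ∈ (0,1)`,
`y = 𝒜 X★ + e` with `rank X★ ≤ r`, `rank X̃ ≤ ℓ`, `C > 0` and `f(X̃) > C²‖e‖₂²`, then
`‖X̃ - X★‖_F² ≤ ((1 + 2/C)/(1 - δ)) f(X̃) + (1/(1 - δ))‖e‖₂²`. -/
theorem stmt9 {m n p : ℕ} (A : Matrix (Fin m) (Fin n) ℝ →ₗ[ℝ] (Fin p → ℝ))
    (r ℓ : ℕ) (δ : ℝ) (hδ0 : 0 < δ) (hδ1 : δ < 1) (hRIP : RIP A (r + ℓ) δ)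
    (Xstar : Matrix (Fin m) (Fin n) ℝ) (hXstar : Xstar.rank ≤ r)
    (e : Fin p → ℝ) (y : Fin p → ℝ) (hy : y = A Xstar + e)
    (Xt : Matrix (Fin m) (Fin n) ℝ) (hXt : Xt.rank ≤ ℓ)
    (C : ℝ) (hC : 0 < C) (hfXt : dataErr A y Xt > C ^ 2 * vecNormSq e) :
    frobSq (Xt - Xstar) ≤ ((1 + 2 / C) / (1 - δ)) * dataErr A y Xt
      + (1 / (1 - δ)) * vecNormSq e := by
  have h1δ : (0:ℝ) < 1 - δ := by linarith
  set u : Fin p → ℝ := A Xt - y with hu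
  set F := dataErr A y Xt with hFdef
  set E := vecNormSq e with hEdef
  -- rank bound
  have hrank : (Xt - Xstar).rank ≤ r + ℓ := by
    calc (Xt - Xstar).rank ≤ Xt.rank + Xstar.rank := my_rank_sub_le _ _
      _ ≤ ℓ + r := Nat.add_le_add hXt hXstar
      _ = r + ℓ := Nat.add_comm _ _
  have hlow := (hRIP (Xt - Xstar) hrank).1
  -- A(Xt - Xstar) = u + e
  have hAD : A (Xt - Xstar) = u + e := by
    rw [map_sub, hu, hy]
    abel
  -- expand
  have hexpand : vecNormSq (u + e) = vecNormSq u + 2 * dotp u e + vecNormSq e := by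
    simp only [vecNormSq, dotp, Pi.add_apply, Finset.mul_sum]
    rw [← Finset.sum_add_distrib, ← Finset.sum_add_distrib]
    exact Finset.sum_congr rfl fun i _ => by ring
  have hFu : vecNormSq u = F := by
    simp only [vecNormSq, hFdef, dataErr, hu]
    exact Finset.sum_congr rfl fun i _ => by simp [Pi.sub_apply]; ring
  -- cross term bound
  have hcross : 2 * dotp u e ≤ vecNormSq u / C + C * E := by
    simp only [dotp, vecNormSq, hEdef, Finset.mul_sum, Finset.sum_div]
    rw [← Finset.sum_add_distrib]
    refine Finset.sum_le_sum fun i _ => ?_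
    have h := sq_nonneg (u i - C * e i)
    have hC2 : 0 < C := hC
    rw [div_add' _ _ _ (ne_of_gt hC), le_div_iff₀ hC]
    nlinarith [sq_nonneg (u i - C * e i)]
  have hCE : C * E ≤ F / C := by
    rw [le_div_iff₀ hC]
    nlinarith [hfXt]
  have key : (1 - δ) * frobSq (Xt - Xstar) ≤ F + 2 * (F / C) + E := by
    have := hlow
    rw [hAD, hexpand, hFu] at this
    have h2 : vecNormSq u / C = F / C := by rw [hFu]
    calc (1 - δ) * frobSq (Xt - Xstar) ≤ F + 2 * dotp u e + E := this
      _ ≤ F + (vecNormSq u / C + C * E) + E := by linarith [hcross]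
      _ ≤ F + (F / C + F / C) + E := by rw [h2]; linarith [hCE]
      _ = F + 2 * (F / C) + E := by ring
  have hrw : ((1 + 2 / C) / (1 - δ)) * F + (1 / (1 - δ)) * E
      = (F + 2 * (F / C) + E) / (1 - δ) := by ring
  rw [hrw, le_div_iff₀ h1δ]
  calc frobSq (Xt - Xstar) * (1 - δ) = (1 - δ) * frobSq (Xt - Xstar) := by ring
    _ ≤ F + 2 * (F / C) + E := key
end

section
/- Let (a_i)_{i≥0} be a sequence of nonnegative reals, and let θ ∈ [0,1), τ ≥ 0, C > 0, b ≥ 0 be constants such that for every i, if a_i > C²·b then a_{i+1} ≤ θ·a_i + τ·b. Then inf_{i} a_i ≤ max{C², τ/(1−θ)}·b. -/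
open scoped BigOperators

open Filter Topology

/-!
Either some `a i` already lies below `C² b`, or the recursion applies at every step. In the
latter case `a i - L` contracts geometrically towards the fixed point `L = τ b / (1 - θ)` of
`x ↦ θ x + τ b`, so the infimum is at most `L`. Both `C² b` and `L` are at most
`max {C², τ/(1-θ)} · b`.
-/

section AffineContraction

variable {a : ℕ → ℝ} {θ c : ℝ}

theorem sub_le_pow_mul_sub_of_le_mul_add (hθ0 : 0 ≤ θ) (hθ1 : θ ≠ 1)
    (h : ∀ i, a (i + 1) ≤ θ * a i + c) (n : ℕ) :
    a n - c / (1 - θ) ≤ θ ^ n * (a 0 - c / (1 - θ)) := by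
  set L := c / (1 - θ)
  have hfix : θ * L + c = L := by
    simp only [L]
    field_simp [sub_ne_zero.mpr hθ1.symm]
    ring
  induction n with
  | zero => simp
  | succ n ih =>
    calc a (n + 1) - L ≤ θ * (a n - L) := by linarith [h n]
      _ ≤ θ * (θ ^ n * (a 0 - L)) := mul_le_mul_of_nonneg_left ih hθ0
      _ = θ ^ (n + 1) * (a 0 - L) := by ring

theorem iInf_le_div_one_sub_of_le_mul_add (hbdd : BddBelow (Set.range a)) (hθ0 : 0 ≤ θ)
    (hθ1 : θ < 1) (h : ∀ i, a (i + 1) ≤ θ * a i + c) :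
    ⨅ i, a i ≤ c / (1 - θ) := by
  have hlim : Tendsto (fun n ↦ c / (1 - θ) + θ ^ n * (a 0 - c / (1 - θ))) atTop
      (𝓝 (c / (1 - θ))) := by
    simpa using tendsto_const_nhds.add
      ((tendsto_pow_atTop_nhds_zero_of_lt_one hθ0 hθ1).mul_const (a 0 - c / (1 - θ)))
  refine ge_of_tendsto' hlim fun n ↦ ciInf_le_of_le hbdd n ?_
  linarith [sub_le_pow_mul_sub_of_le_mul_add hθ0 hθ1.ne h n]

end AffineContraction

theorem stmt13_general (a : ℕ → ℝ) (θ τ C b : ℝ) (ha : ∀ i, 0 ≤ a i)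
    (hθ0 : 0 ≤ θ) (hθ1 : θ < 1) (hb : 0 ≤ b)
    (hrec : ∀ i, a i > C ^ 2 * b → a (i + 1) ≤ θ * a i + τ * b) :
    (⨅ i, a i) ≤ max (C ^ 2) (τ / (1 - θ)) * b := by
  have hbdd : BddBelow (Set.range a) := ⟨0, by rintro _ ⟨i, rfl⟩; exact ha i⟩
  by_cases hsmall : ∃ i, a i ≤ C ^ 2 * b
  · obtain ⟨i, hi⟩ := hsmall
    exact ciInf_le_of_le hbdd i
      (hi.trans (mul_le_mul_of_nonneg_right (le_max_left _ _) hb))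
  · push Not at hsmall
    calc ⨅ i, a i ≤ τ * b / (1 - θ) :=
          iInf_le_div_one_sub_of_le_mul_add hbdd hθ0 hθ1 fun i ↦ hrec i (hsmall i)
      _ = τ / (1 - θ) * b := by ring
      _ ≤ max (C ^ 2) (τ / (1 - θ)) * b := mul_le_mul_of_nonneg_right (le_max_right _ _) hb

/-- Deterministic contraction argument.  If `(a_i)` is a nonnegative real
sequence, `θ ∈ [0,1)`, `τ ≥ 0`, `C > 0`, `b ≥ 0`, and `a_i > C² b → a_{i+1} ≤ θ a_i + τ b`
for every `i`, then `inf_i a_i ≤ max {C², τ/(1-θ)} · b`. -/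
theorem stmt13 (a : ℕ → ℝ) (θ τ C b : ℝ) (ha : ∀ i, 0 ≤ a i)
    (hθ0 : 0 ≤ θ) (hθ1 : θ < 1) (hτ : 0 ≤ τ) (hC : 0 < C) (hb : 0 ≤ b)
    (hrec : ∀ i, a i > C ^ 2 * b → a (i + 1) ≤ θ * a i + τ * b) :
    (⨅ i, a i) ≤ max (C ^ 2) (τ / (1 - θ)) * b :=
  stmt13_general a θ τ C b ha hθ0 hθ1 hb hrec
end
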